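/- Quantitative subject reduction: if t is closed, π derives ⊢ t : A, and t weak-head reduces to u (i.e., (λy.s)r r₁…r_h →wh s{y := r} r₁…r_h), then there is a derivation π' of ⊢ u : A with |π| > |π'|. -/

import Mathlib

/-! # Tree intersection types -/

mutual
/-- Linear types: `A ::= ⋆ | T → A`. -/
inductive LinTy : Type where
  | star : LinTy
  | arr : TreeTy → LinTy → LinTy
/-- Generic types: linear types or tree types. -/
inductive GenTy : Type where
  | lin : LinTy → GenTy
  | tree : TreeTy → GenTy
/-- Tree types: finite sequences of generic types. -/
inductive TreeTy : Type where
  | node : List GenTy → TreeTy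
end

mutual
/-- Leaves of a generic type. -/
def GenTy.leaves : GenTy → List LinTy
  | .lin A => [A]
  | .tree T => TreeTy.leaves T
  termination_by g => sizeOf g
/-- Leaves extraction on tree types. -/
def TreeTy.leaves : TreeTy → List LinTy
  | .node gs => gs.attach.flatMap (fun g => GenTy.leaves g.1)
  termination_by T => sizeOf T
  decreasing_by simp_wf; have := List.sizeOf_lt_of_mem g.2; omega
end

/-- Concatenation `⊎` of tree types (sequences). -/
def TreeTy.cat : TreeTy → TreeTy → TreeTy
  | .node a, .node b => .node (a ++ b)

mutual
/-- Weight (size) of a linear type, with parameter `X`. -/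
def LinTy.weight (X : ℕ) : LinTy → ℕ
  | .star => 0
  | .arr T A => max (TreeTy.weight X T) (LinTy.weight X A + 1)
  termination_by A => sizeOf A
def GenTy.weight (X : ℕ) : GenTy → ℕ
  | .lin A => LinTy.weight X A
  | .tree T => TreeTy.weight X T
  termination_by g => sizeOf g
def TreeTy.weight (X : ℕ) : TreeTy → ℕ
  | .node gs => X + (gs.attach.map (fun g => GenTy.weight X g.1)).foldr max 0
  termination_by T => sizeOf T
  decreasing_by simp_wf; have := List.sizeOf_lt_of_mem g.2; omega
end

mutual
/-- Hereditary absence of empty sequences (every leaf context ends in `⋆`). -/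
inductive LinTy.Good : LinTy → Prop where
  | star : LinTy.Good .star
  | arr {T A} : TreeTy.Good T → LinTy.Good A → LinTy.Good (.arr T A)
inductive GenTy.Good : GenTy → Prop where
  | lin {A} : LinTy.Good A → GenTy.Good (.lin A)
  | tree {T} : TreeTy.Good T → GenTy.Good (.tree T)
inductive TreeTy.Good : TreeTy → Prop where
  | node {gs : List GenTy} : gs ≠ [] → (∀ g ∈ gs, GenTy.Good g) → TreeTy.Good (.node gs)
end

/-! ## Leaf contexts -/

/-- One-hole contexts into tree types whose hole sits at a leaf position. -/
inductive LeafCtx : Type where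
  | here (l r : List GenTy) : LeafCtx
  | deeper (l : List GenTy) (L : LeafCtx) (r : List GenTy) : LeafCtx

/-- Plugging a linear type into a leaf context. -/
def LeafCtx.plug : LeafCtx → LinTy → TreeTy
  | .here l r, A => .node (l ++ .lin A :: r)
  | .deeper l L r, A => .node (l ++ .tree (L.plug A) :: r)

/-- Number of leaves strictly to the left of the hole. -/
def LeafCtx.holeIdx : LeafCtx → ℕ
  | .here l _ => (TreeTy.node l).leaves.length
  | .deeper l L _ => (TreeTy.node l).leaves.length + L.holeIdx

/-! ## Type contexts -/

mutual
/-- Linear type contexts: `𝕃c ::= ⟨·⟩ | T → 𝕃c | 𝕋 → A`. -/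
inductive LinCtx : Type where
  | hole : LinCtx
  | arrR : TreeTy → LinCtx → LinCtx
  | arrL : TreeCtx → LinTy → LinCtx
/-- Tree type contexts. -/
inductive TreeCtx : Type where
  | node : List GenTy → GenCtx → List GenTy → TreeCtx
/-- Generic type contexts. -/
inductive GenCtx : Type where
  | lin : LinCtx → GenCtx
  | tree : TreeCtx → GenCtx
end

mutual
def LinCtx.plug : LinCtx → LinTy → LinTy
  | .hole, B => B
  | .arrR T C, B => .arr T (C.plug B)
  | .arrL C A, B => .arr (C.plug B) A
def TreeCtx.plug : TreeCtx → LinTy → TreeTy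
  | .node l C r, B => .node (l ++ C.plug B :: r)
def GenCtx.plug : GenCtx → LinTy → GenTy
  | .lin C, B => .lin (C.plug B)
  | .tree C, B => .tree (C.plug B)
end

mutual
/-- Branch size of a linear type context. -/
def LinCtx.bsize (X : ℕ) : LinCtx → ℕ
  | .hole => 0
  | .arrR _ C => 1 + C.bsize X
  | .arrL C _ => C.bsize X
def TreeCtx.bsize (X : ℕ) : TreeCtx → ℕ
  | .node _ C _ => X + C.bsize X
def GenCtx.bsize (X : ℕ) : GenCtx → ℕ
  | .lin C => C.bsize X
  | .tree C => C.bsize X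
end

/-! # λ-terms (de Bruijn) and Closed Call-by-Name -/

inductive Term : Type where
  | var : ℕ → Term
  | lam : Term → Term
  | app : Term → Term → Term

/-- Shifting of free indices `≥ c` by `d`. -/
def Term.lift (d : ℕ) : ℕ → Term → Term
  | c, .var n => if n < c then .var n else .var (n + d)
  | c, .lam t => .lam (Term.lift d (c+1) t)
  | c, .app t u => .app (Term.lift d c t) (Term.lift d c u)

/-- Capture-avoiding substitution of `u` for index `k`. -/
def Term.subst (u : Term) : ℕ → Term → Term
  | k, .var n => if n = k then Term.lift k 0 u else if k < n then .var (n-1) else .var n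
  | k, .lam t => .lam (Term.subst u (k+1) t)
  | k, .app t s => .app (Term.subst u k t) (Term.subst u k s)

/-- `t{x₀ := u}`. -/
def Term.subst0 (t u : Term) : Term := Term.subst u 0 t

def Term.ClosedUnder : Term → ℕ → Prop
  | .var n, k => n < k
  | .lam t, k => t.ClosedUnder (k+1)
  | .app t u, k => t.ClosedUnder k ∧ u.ClosedUnder k

/-- Closed terms: no free variables. -/
def Term.Closed (t : Term) : Prop := t.ClosedUnder 0

/-- Occurrence of a free variable. -/
def Term.FreeIn : Term → ℕ → Prop
  | .var n, x => n = x
  | .lam t, x => t.FreeIn (x+1)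
  | .app t u, x => t.FreeIn x ∨ u.FreeIn x

/-- Weak head reduction `(λy.t)u r₁…r_h →wh t{y:=u} r₁…r_h`. -/
inductive Whr : Term → Term → Prop where
  | beta (t u : Term) : Whr (.app (.lam t) u) (t.subst0 u)
  | appL {t t' : Term} (u : Term) : Whr t t' → Whr (.app t u) (.app t' u)

/-- `n`-step weak head reduction. -/
inductive WhN : ℕ → Term → Term → Prop where
  | refl (t : Term) : WhN 0 t t
  | step {n t u v} : Whr t u → WhN n u v → WhN (n+1) t v

/-! # Type environments and the tree type system -/

/-- Type environments: maps from (de Bruijn) variables to tree types. -/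
def Env : Type := ℕ → TreeTy

def Env.empty : Env := fun _ => .node []

/-- Pointwise concatenation `Γ ⊎ Δ`. -/
def Env.union (Γ Δ : Env) : Env := fun x => (Γ x).cat (Δ x)

/-- Environment of the variable axiom: `x : [A]`. -/
def Env.single (x : ℕ) (A : LinTy) : Env :=
  fun y => if y = x then .node [.lin A] else .node []

/-- Environment extension `Γ, x₀:T` (de Bruijn cons). -/
def Env.cons (T : TreeTy) (Γ : Env) : Env
  | 0 => T
  | n+1 => Γ n

/-- Wrap a (non-empty) tree type in one extra sequence layer. -/
def TreeTy.wrap : TreeTy → TreeTy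
  | .node [] => .node []
  | T => .node [.tree T]

/-- `[Γ]`: wrap each (non-empty) type of the environment in one extra layer. -/
def Env.wrap (Γ : Env) : Env := fun x => (Γ x).wrap

/-- Finite union of environments. -/
def Env.unionF {n : ℕ} (Γs : Fin n → Env) : Env :=
  (List.ofFn Γs).foldr Env.union Env.empty

/-- Tree type derivations. -/
inductive Deriv : Env → Term → GenTy → Type where
  | var (x : ℕ) (A : LinTy) : Deriv (Env.single x A) (.var x) (.lin A)
  | lam {Γ : Env} {T : TreeTy} {t : Term} {A : LinTy} :
      Deriv (Env.cons T Γ) t (.lin A) → Deriv Γ (.lam t) (.lin (.arr T A))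
  | lamStar (t : Term) : Deriv Env.empty (.lam t) (.lin .star)
  | app {Γ Δ : Env} {t u : Term} {T : TreeTy} {A : LinTy} :
      Deriv Γ t (.lin (.arr T A)) → Deriv Δ u (.tree T) →
      Deriv (Env.union Γ Δ) (.app t u) (.lin A)
  | many {t : Term} (n : ℕ) (Γs : Fin n → Env) (Gs : Fin n → GenTy)
      (prems : ∀ i, Deriv (Γs i) t (Gs i)) :
      Deriv (Env.wrap (Env.unionF Γs)) t (.tree (.node (List.ofFn Gs)))
  | none (t : Term) : Deriv Env.empty t (.tree (.node []))

/-- Size of a derivation: number of rules that are not T-many/T-none. -/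
def Deriv.size : ∀ {Γ t G}, Deriv Γ t G → ℕ
  | _, _, _, .var _ _ => 1
  | _, _, _, .lam π => π.size + 1
  | _, _, _, .lamStar _ => 1
  | _, _, _, .app π ρ => π.size + ρ.size + 1
  | _, _, _, .many n _ _ prems => ∑ i : Fin n, (prems i).size
  | _, _, _, .none _ => 0

/-- Weight of a weighted derivation, with parameter `X`. -/
def Deriv.weight (X : ℕ) : ∀ {Γ t G}, Deriv Γ t G → ℕ
  | _, _, _, .var _ A => A.weight X
  | _, _, _, .lam (T := T) (A := A) π => max (π.weight X) (LinTy.weight X (.arr T A))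
  | _, _, _, .lamStar _ => 0
  | _, _, _, .app π ρ => max (π.weight X) (ρ.weight X)
  | _, _, _, .many n _ _ prems => X + (Finset.univ.sup fun i => (prems i).weight X)
  | _, _, _, .none _ => 0

/-- `SubD π n π'`: the judgment of `π'` occurs in `π`, crossing `n` T-many rules
descending from it to the root. -/
inductive SubD : ∀ {Γ t G}, Deriv Γ t G → ℕ → ∀ {Γ' u G'}, Deriv Γ' u G' → Prop where
  | refl {Γ t G} (π : Deriv Γ t G) : SubD π 0 π
  | lam {Γ T t A} {π : Deriv (Env.cons T Γ) t (.lin A)} {n} {Γ' u G'} {π' : Deriv Γ' u G'} :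
      SubD π n π' → SubD (Deriv.lam π) n π'
  | appL {Γ Δ t u T A} {π : Deriv Γ t (.lin (.arr T A))} {ρ : Deriv Δ u (.tree T)}
      {n} {Γ' v G'} {π' : Deriv Γ' v G'} :
      SubD π n π' → SubD (Deriv.app π ρ) n π'
  | appR {Γ Δ t u T A} {π : Deriv Γ t (.lin (.arr T A))} {ρ : Deriv Δ u (.tree T)}
      {n} {Γ' v G'} {π' : Deriv Γ' v G'} :
      SubD ρ n π' → SubD (Deriv.app π ρ) n π'
  | many {t k} {Γs : Fin k → Env} {Gs : Fin k → GenTy} {prems : ∀ i, Deriv (Γs i) t (Gs i)}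
      (i : Fin k) {n} {Γ' u G'} {π' : Deriv Γ' u G'} :
      SubD (prems i) n π' → SubD (Deriv.many k Γs Gs prems) (n+1) π'

/-!
Tree types are linear: the type `Γ(x)` that `π` assigns to the bound variable has one leaf per
axiom on `x`, so a derivation `ρ` of the argument `u : Γ(x)` splits, along the structure of
`Γ(x)`, into one derivation per axiom. Substitution replaces each such axiom (of size 1) by its
own piece of `ρ`, whence `|π{x := u}| ≤ |π| + |ρ|`, and the weak head step loses at least the
T-abs and T-app rules of the redex. Since `u` is closed, all its derivations live in the empty
environment, so the pieces of `ρ` can be regrouped freely.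
-/

lemma Term.lift_of_closedUnder :
    ∀ {t : Term} {c : ℕ}, t.ClosedUnder c → ∀ d, t.lift d c = t
  | .var n, c, h, d => by simp only [Term.ClosedUnder] at h; simp [Term.lift, h]
  | .lam t, c, h, d => by
      rw [Term.lift, Term.lift_of_closedUnder (show t.ClosedUnder (c + 1) from h)]
  | .app t u, c, h, d => by
      rw [Term.lift, Term.lift_of_closedUnder h.1, Term.lift_of_closedUnder h.2]

/-- The environment of `t{xₖ := u}` when `t` is typed in `Γ`. -/
def Env.drop (k : ℕ) (Γ : Env) : Env := fun x => Γ (if x < k then x else x + 1)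

lemma Env.drop_single_self (k : ℕ) (A : LinTy) : Env.drop k (Env.single k A) = Env.empty := by
  funext y
  simp only [Env.drop, Env.single, Env.empty]
  split_ifs <;> first | rfl | omega

lemma Env.drop_single_of_ne {x k : ℕ} (h : x ≠ k) (A : LinTy) :
    Env.drop k (Env.single x A) = Env.single (if x < k then x else x - 1) A := by
  funext y
  simp only [Env.drop, Env.single]
  split_ifs <;> first | rfl | omega

lemma Env.drop_succ_cons (k : ℕ) (T : TreeTy) (Γ : Env) :
    Env.drop (k + 1) (Env.cons T Γ) = Env.cons T (Env.drop k Γ) := by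
  funext y
  cases y with
  | zero => rfl
  | succ y =>
      simp only [Env.drop, Env.cons, Nat.add_lt_add_iff_right]
      split_ifs <;> rfl

lemma Env.unionF_succ {n : ℕ} (Γs : Fin (n + 1) → Env) :
    Env.unionF Γs = Env.union (Γs 0) (Env.unionF fun i => Γs i.succ) := by
  rw [Env.unionF, List.ofFn_succ]
  rfl

lemma Env.unionF_drop (k : ℕ) : ∀ {n : ℕ} (Γs : Fin n → Env),
    Env.unionF (fun i => Env.drop k (Γs i)) = Env.drop k (Env.unionF Γs)
  | 0, _ => rfl
  | n + 1, Γs => by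
      rw [Env.unionF_succ, Env.unionF_succ Γs, Env.unionF_drop k]
      rfl

lemma Env.unionF_apply_eq_nil : ∀ {n : ℕ} {Γs : Fin n → Env} {x : ℕ},
    (∀ i, Γs i x = .node []) → Env.unionF Γs x = .node []
  | 0, _, _, _ => rfl
  | n + 1, Γs, x, h => by
      rw [Env.unionF_succ]
      show (Γs 0 x).cat (Env.unionF (fun i => Γs i.succ) x) = _
      rw [h 0, Env.unionF_apply_eq_nil fun i => h i.succ]
      rfl

lemma Deriv.apply_eq_nil_of_closedUnder {Γ : Env} {t : Term} {G : GenTy} (π : Deriv Γ t G)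
    {k : ℕ} (ht : t.ClosedUnder k) {x : ℕ} (hx : k ≤ x) : Γ x = .node [] := by
  induction π generalizing k x with
  | var y A =>
      simp only [Term.ClosedUnder] at ht
      simp [Env.single, show x ≠ y by omega]
  | lam _ ih => exact ih (k := k + 1) ht (x := x + 1) (by omega)
  | lamStar => rfl
  | app _ _ ih₁ ih₂ =>
      show TreeTy.cat _ _ = _
      rw [ih₁ ht.1 hx, ih₂ ht.2 hx]
      rfl
  | many _ _ _ _ ih =>
      show (Env.unionF _ x).wrap = _
      rw [Env.unionF_apply_eq_nil fun i => ih i ht hx]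
      rfl
  | none => rfl

lemma Deriv.env_eq_empty {Γ : Env} {t : Term} {G : GenTy} (π : Deriv Γ t G) (ht : t.Closed) :
    Γ = Env.empty :=
  funext fun _ => π.apply_eq_nil_of_closedUnder ht (Nat.zero_le _)

def Deriv.castEnv {Γ Γ' : Env} {t : Term} {G : GenTy} (h : Γ = Γ') (π : Deriv Γ t G) :
    Deriv Γ' t G :=
  h ▸ π

@[simp]
lemma Deriv.size_castEnv {Γ Γ' : Env} {t : Term} {G : GenTy} (h : Γ = Γ') (π : Deriv Γ t G) :
    (π.castEnv h).size = π.size := by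
  subst h
  rfl

/-- The premises of T-many indexed by a list rather than by `List.ofFn`, so that they can be
split along `a ++ b`. -/
inductive Derivs (u : Term) : List GenTy → ℕ → Prop where
  | nil : Derivs u [] 0
  | cons {Γ : Env} {g : GenTy} {gs : List GenTy} {n : ℕ} (π : Deriv Γ u g) :
      Derivs u gs n → Derivs u (g :: gs) (π.size + n)

namespace Derivs

variable {u : Term}

theorem ofFn : ∀ {n : ℕ} {Γs : Fin n → Env} {Gs : Fin n → GenTy}
    (ps : ∀ i, Deriv (Γs i) u (Gs i)), Derivs u (List.ofFn Gs) (∑ i, (ps i).size)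
  | 0, _, _, _ => by simpa using Derivs.nil
  | n + 1, _, _, ps => by
      rw [List.ofFn_succ, Fin.sum_univ_succ]
      exact .cons (ps 0) (ofFn fun i => ps i.succ)

theorem exists_ofFn {gs : List GenTy} {n : ℕ} (h : Derivs u gs n) :
    ∃ (k : ℕ) (Γs : Fin k → Env) (Gs : Fin k → GenTy) (ps : ∀ i, Deriv (Γs i) u (Gs i)),
      List.ofFn Gs = gs ∧ ∑ i, (ps i).size = n := by
  induction h with
  | nil => exact ⟨0, Fin.elim0, Fin.elim0, fun i => i.elim0, rfl, rfl⟩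
  | cons π _ ih =>
      obtain ⟨k, Γs, Gs, ps, rfl, rfl⟩ := ih
      refine ⟨k + 1, Fin.cons _ Γs, Fin.cons _ Gs, Fin.cons π ps, by simp, ?_⟩
      rw [Fin.sum_univ_succ]
      rfl

theorem append_inv : ∀ {a b : List GenTy} {n : ℕ}, Derivs u (a ++ b) n →
    ∃ n₁ n₂, Derivs u a n₁ ∧ Derivs u b n₂ ∧ n₁ + n₂ = n
  | [], _, n, h => ⟨0, n, .nil, h, zero_add n⟩
  | _ :: _, _, _, .cons π h =>
      let ⟨_, n₂, h₁, h₂, e⟩ := append_inv h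
      ⟨_, n₂, .cons π h₁, h₂, by omega⟩

theorem singleton_inv {g : GenTy} {n : ℕ} (h : Derivs u [g] n) :
    ∃ (Γ : Env) (π : Deriv Γ u g), π.size = n := by
  obtain _ | ⟨π, h⟩ := h
  cases h
  exact ⟨_, π, rfl⟩

theorem of_tree {Δ : Env} {gs : List GenTy} (ρ : Deriv Δ u (.tree (.node gs))) :
    Derivs u gs ρ.size := by
  cases ρ with
  | many _ _ _ ps => exact ofFn ps
  | none => exact .nil

theorem exists_tree {gs : List GenTy} {n : ℕ} (h : Derivs u gs n) :
    ∃ (Δ : Env) (ρ : Deriv Δ u (.tree (.node gs))), ρ.size = n := by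
  obtain ⟨k, Γs, Gs, ps, rfl, rfl⟩ := h.exists_ofFn
  exact ⟨_, .many k Γs Gs ps, rfl⟩

end Derivs

section TreeInversion

variable {u : Term} {Δ : Env}

theorem Deriv.exists_of_tree_singleton {T : TreeTy} {g : GenTy} (hT : T = .node [g])
    (ρ : Deriv Δ u (.tree T)) : ∃ (Γ : Env) (π : Deriv Γ u g), π.size = ρ.size := by
  subst hT
  exact (Derivs.of_tree ρ).singleton_inv

theorem Deriv.exists_unwrap {T : TreeTy} (ρ : Deriv Δ u (.tree T.wrap)) :
    ∃ (Δ' : Env) (ρ₀ : Deriv Δ' u (.tree T)), ρ₀.size = ρ.size := by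
  obtain ⟨_ | ⟨g, l⟩⟩ := T
  · exact ⟨Δ, ρ, rfl⟩
  · exact Deriv.exists_of_tree_singleton rfl ρ

theorem Deriv.exists_split_cat {T T₁ T₂ : TreeTy} (hT : T = T₁.cat T₂)
    (ρ : Deriv Δ u (.tree T)) :
    ∃ (Δ₁ Δ₂ : Env) (ρ₁ : Deriv Δ₁ u (.tree T₁)) (ρ₂ : Deriv Δ₂ u (.tree T₂)),
      ρ₁.size + ρ₂.size = ρ.size := by
  subst hT
  obtain ⟨a⟩ := T₁
  obtain ⟨b⟩ := T₂
  obtain ⟨n₁, n₂, h₁, h₂, e⟩ := (Derivs.of_tree (gs := a ++ b) ρ).append_inv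
  obtain ⟨Δ₁, ρ₁, rfl⟩ := h₁.exists_tree
  obtain ⟨Δ₂, ρ₂, rfl⟩ := h₂.exists_tree
  exact ⟨Δ₁, Δ₂, ρ₁, ρ₂, e⟩

theorem Deriv.exists_split_unionF : ∀ {n : ℕ} {Δ : Env} (Γs : Fin n → Env) (x : ℕ)
    (ρ : Deriv Δ u (.tree (Env.unionF Γs x))),
    ∃ (Δs : Fin n → Env) (ρs : ∀ i, Deriv (Δs i) u (.tree (Γs i x))),
      ∑ i, (ρs i).size = ρ.size
  | 0, _, _, _, ρ => by
      have h : Derivs u [] ρ.size := Derivs.of_tree ρ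
      generalize ρ.size = m at h ⊢
      cases h
      exact ⟨Fin.elim0, fun i => i.elim0, rfl⟩
  | n + 1, _, Γs, x, ρ => by
      obtain ⟨Δ₀, Δ', ρ₀, ρ', hρ⟩ := Deriv.exists_split_cat
        (congrFun (Env.unionF_succ Γs) x) ρ
      obtain ⟨Δs, ρs, hρs⟩ := Deriv.exists_split_unionF (fun i => Γs i.succ) x ρ'
      refine ⟨Fin.cons Δ₀ Δs, Fin.cons ρ₀ ρs, ?_⟩
      rw [Fin.sum_univ_succ]
      exact hρs ▸ hρ

end TreeInversion

theorem Deriv.exists_subst {u : Term} (hu : u.Closed) {Γ : Env} {t : Term} {G : GenTy}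
    (π : Deriv Γ t G) (k : ℕ) {Δ : Env} (ρ : Deriv Δ u (.tree (Γ k))) :
    ∃ π' : Deriv (Env.drop k Γ) (Term.subst u k t) G, π'.size ≤ π.size + ρ.size := by
  induction π generalizing k Δ with
  | var x A =>
      obtain rfl | hxk := eq_or_ne x k
      · obtain ⟨Δ', π₀, hπ₀⟩ :=
          Deriv.exists_of_tree_singleton (g := .lin A) (by simp [Env.single]) ρ
        have henv : Δ' = Env.drop x (Env.single x A) := by
          rw [π₀.env_eq_empty hu, Env.drop_single_self]
        have hsubst : Term.subst u x (.var x) = u := by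
          simp [Term.subst, Term.lift_of_closedUnder hu]
        rw [hsubst]
        exact ⟨π₀.castEnv henv, by simp only [Deriv.size_castEnv, Deriv.size]; omega⟩
      · have hsubst : Term.subst u k (.var x) = .var (if x < k then x else x - 1) := by
          simp only [Term.subst]
          split_ifs <;> first | rfl | omega
        rw [hsubst, Env.drop_single_of_ne hxk]
        exact ⟨.var _ A, by simp [Deriv.size]⟩
  | lam π ih =>
      obtain ⟨π', hπ'⟩ := ih (k + 1) ρ
      replace hπ' : π'.size ≤ π.size + ρ.size := hπ'
      exact ⟨.lam (π'.castEnv (Env.drop_succ_cons k _ _)), by simp [Deriv.size]; omega⟩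
  | lamStar => exact ⟨.lamStar _, by simp [Deriv.size]⟩
  | app π₁ π₂ ih₁ ih₂ =>
      obtain ⟨_, _, ρ₁, ρ₂, hρ⟩ := Deriv.exists_split_cat (by exact rfl) ρ
      obtain ⟨π₁', h₁⟩ := ih₁ k ρ₁
      obtain ⟨π₂', h₂⟩ := ih₂ k ρ₂
      exact ⟨.app π₁' π₂',
        show π₁'.size + π₂'.size + 1 ≤ π₁.size + π₂.size + 1 + ρ.size by omega⟩
  | many n Γs Gs prems ih =>
      obtain ⟨_, ρ₀, hρ₀⟩ := Deriv.exists_unwrap ρ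
      obtain ⟨_, ρs, hρs⟩ := Deriv.exists_split_unionF Γs k ρ₀
      choose ps hps using fun i => ih i k (ρs i)
      refine ⟨(Deriv.many n _ Gs ps).castEnv (congrArg Env.wrap (Env.unionF_drop k Γs)), ?_⟩
      calc _ = ∑ i, (ps i).size := Deriv.size_castEnv _ _
        _ ≤ ∑ i, ((prems i).size + (ρs i).size) := Finset.sum_le_sum fun i _ => hps i
        _ = (Deriv.many n Γs Gs prems).size + ρ.size := by
          rw [Finset.sum_add_distrib, hρs, hρ₀]
          rfl
  | none => exact ⟨.none _, by simp [Deriv.size]⟩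

theorem Deriv.exists_size_lt_of_whr {t u : Term} (hr : Whr t u) (hc : t.Closed) {Γ : Env}
    {A : LinTy} (π : Deriv Γ t (.lin A)) : ∃ π' : Deriv Γ u (.lin A), π'.size < π.size := by
  induction hr generalizing Γ A with
  | beta t r =>
      cases π with | app π₁ π₂ =>
      cases π₁ with | lam π₀ =>
      obtain rfl := π₀.lam.env_eq_empty hc.1
      obtain rfl := π₂.env_eq_empty hc.2
      obtain ⟨π', hπ'⟩ := π₀.exists_subst hc.2 0 π₂
      replace hπ' : π'.size ≤ π₀.size + π₂.size := hπ'
      exact ⟨π'.castEnv rfl, show π'.size < π₀.size + 1 + π₂.size + 1 by omega⟩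
  | appL r _ ih =>
      cases π with | app π₁ π₂ =>
      obtain ⟨π₁', h₁⟩ := ih hc.1 π₁
      exact ⟨.app π₁' π₂, show π₁'.size + π₂.size + 1 < π₁.size + π₂.size + 1 by omega⟩

/-- quantitative subject reduction. -/
theorem quantitative_subject_reduction {t u : Term} {A : LinTy}
    (hc : t.Closed) (π : Deriv Env.empty t (.lin A)) (hr : Whr t u) :
    ∃ π' : Deriv Env.empty u (.lin A), π'.size < π.size :=
  π.exists_size_lt_of_whr hr hc
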